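/- arXiv:2309.01481 — 5 statements merged into one kernel-verified Lean document; each statement's English description precedes it below -/
import Mathlib

section
/- Let G ≥ 0 and I > 0 be real numbers, and define h(ϖ) = ln(1 + ϖ) − ϖ + (1 + ϖ)·G/(G + I) for ϖ > −1. Then h is concave on (−1, ∞), h attains its maximum on [0, ∞) uniquely at ϖ* = G/I, and h(ϖ*) = ln(1 + G/I). In particular, h(ϖ) ≤ ln(1 + G/I) for every ϖ > −1. -/
lemma stmt_2_aux (G I : ℝ) (hG : 0 ≤ G) (hI : 0 < I) (h : ℝ → ℝ)
    (hdef : ∀ ϖ : ℝ, h ϖ = Real.log (1 + ϖ) - ϖ + (1 + ϖ) * G / (G + I)) :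
    ∀ ϖ : ℝ, -1 < ϖ →
      h ϖ = Real.log (1 + G / I) + (Real.log ((1 + ϖ) / (1 + G / I)) -
        ((1 + ϖ) / (1 + G / I) - 1)) := by
  intro ϖ hϖ
  have hGI : 0 < G + I := by linarith
  have ha : (0:ℝ) ≤ G / I := div_nonneg hG hI.le
  have h1a : (0:ℝ) < 1 + G / I := by linarith
  have h1ϖ : (0:ℝ) < 1 + ϖ := by linarith
  rw [hdef, Real.log_div (ne_of_gt h1ϖ) (ne_of_gt h1a)]
  have hIne : I ≠ 0 := ne_of_gt hI
  have hGIne : G + I ≠ 0 := ne_of_gt hGI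
  field_simp
  ring

/-- Scalar Lagrangian dual transform: for `G ≥ 0`, `I > 0`, the function
`h(ϖ) = ln(1+ϖ) − ϖ + (1+ϖ)·G/(G+I)` is concave on `(−1, ∞)`, is maximized on `[0, ∞)`
uniquely at `ϖ* = G/I` with maximal value `ln(1 + G/I)`, and `h(ϖ) ≤ ln(1 + G/I)` for
every `ϖ > −1`. -/
theorem stmt_2 (G I : ℝ) (hG : 0 ≤ G) (hI : 0 < I) (h : ℝ → ℝ)
    (hdef : ∀ ϖ : ℝ, h ϖ = Real.log (1 + ϖ) - ϖ + (1 + ϖ) * G / (G + I)) :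
    ConcaveOn ℝ (Set.Ioi (-1 : ℝ)) h ∧
    (∀ ϖ ∈ Set.Ici (0 : ℝ), h ϖ ≤ h (G / I)) ∧
    (∀ ϖ ∈ Set.Ici (0 : ℝ), h ϖ = h (G / I) → ϖ = G / I) ∧
    h (G / I) = Real.log (1 + G / I) ∧
    (∀ ϖ : ℝ, -1 < ϖ → h ϖ ≤ Real.log (1 + G / I)) := by
  have hGI : 0 < G + I := by linarith
  have ha : (0:ℝ) ≤ G / I := div_nonneg hG hI.le
  have h1a : (0:ℝ) < 1 + G / I := by linarith
  have key := stmt_2_aux G I hG hI h hdef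
  -- value at G/I
  have hval : h (G / I) = Real.log (1 + G / I) := by
    rw [key (G / I) (by linarith)]
    rw [div_self (ne_of_gt h1a)]
    simp
  -- inequality on Ioi (-1)
  have hle : ∀ ϖ : ℝ, -1 < ϖ → h ϖ ≤ Real.log (1 + G / I) := by
    intro ϖ hϖ
    rw [key ϖ hϖ]
    have ht : (0:ℝ) < (1 + ϖ) / (1 + G / I) := div_pos (by linarith) h1a
    have := Real.log_le_sub_one_of_pos ht
    linarith
  -- strict inequality if ϖ ≠ G/I
  have hlt : ∀ ϖ : ℝ, -1 < ϖ → ϖ ≠ G / I → h ϖ < Real.log (1 + G / I) := by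
    intro ϖ hϖ hne
    rw [key ϖ hϖ]
    have ht : (0:ℝ) < (1 + ϖ) / (1 + G / I) := div_pos (by linarith) h1a
    have htne : (1 + ϖ) / (1 + G / I) ≠ 1 := by
      intro hcon
      apply hne
      rw [div_eq_one_iff_eq (ne_of_gt h1a)] at hcon
      linarith
    have := Real.log_lt_sub_one_of_pos ht htne
    linarith
  refine ⟨?_, ?_, ?_, hval, hle⟩
  · refine ⟨convex_Ioi _, fun x hx y hy p q hp hq hpq => ?_⟩
    simp only [Set.mem_Ioi] at hx hy
    simp only [smul_eq_mul]
    have h1x : (0:ℝ) < 1 + x := by linarith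
    have h1y : (0:ℝ) < 1 + y := by linarith
    have hlog := strictConcaveOn_log_Ioi.concaveOn.2 (Set.mem_Ioi.mpr h1x)
      (Set.mem_Ioi.mpr h1y) hp hq hpq
    simp only [smul_eq_mul] at hlog
    have harg : p * (1 + x) + q * (1 + y) = 1 + (p * x + q * y) := by
      have : p + q = 1 := hpq
      ring_nf
      linarith
    rw [harg] at hlog
    rw [hdef, hdef, hdef]
    rw [mul_div_assoc, mul_div_assoc, mul_div_assoc]
    set c := G / (G + I) with hc
    have hterm : p * ((1 + x) * c) + q * ((1 + y) * c) = (1 + (p * x + q * y)) * c := by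
      rw [← harg]; ring
    nlinarith [hlog, hterm, hpq]
  · intro ϖ hϖ
    have : (-1:ℝ) < ϖ := by simp at hϖ; linarith
    rw [hval]
    exact hle ϖ this
  · intro ϖ hϖ heq
    by_contra hne
    have : (-1:ℝ) < ϖ := by simp at hϖ; linarith
    have := hlt ϖ this hne
    rw [hval] at heq
    linarith
end

section
/- Let S be a nonempty set, K a positive integer, and for each k ∈ {1, …, K} let G_k : S → ℝ with G_k(x) ≥ 0 and I_k : S → ℝ with I_k(x) > 0 for all x ∈ S. Define F(x) = Σ_{k=1}^K ln(1 + G_k(x)/I_k(x)) and f(x, ϖ) = Σ_{k=1}^K [ln(1 + ϖ_k) − ϖ_k + (1 + ϖ_k)·G_k(x)/(G_k(x) + I_k(x))] for x ∈ S and ϖ ∈ [0,∞)^K. Then for every x ∈ S, the supremum of f(x, ϖ) over ϖ ∈ [0,∞)^K equals F(x), attained at ϖ_k = G_k(x)/I_k(x); consequently sup_{x ∈ S, ϖ ∈ [0,∞)^K} f(x, ϖ) = sup_{x ∈ S} F(x), and a point x* attains the supremum of F over S if and only if (x*, ϖ*) with ϖ*_k = G_k(x*)/I_k(x*) attains the supremum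 of f over S × [0,∞)^K. -/
private lemma term_le (a b ϖ : ℝ) (ha : 0 ≤ a) (hb : 0 < b) (hϖ : 0 ≤ ϖ) :
    Real.log (1 + ϖ) - ϖ + (1 + ϖ) * a / (a + b) ≤ Real.log (1 + a / b) := by
  set γ : ℝ := a / b with hγdef
  have hγ : 0 ≤ γ := div_nonneg ha hb.le
  have h1γ : (0:ℝ) < 1 + γ := by linarith
  have h1ϖ : (0:ℝ) < 1 + ϖ := by linarith
  have hab : (0:ℝ) < a + b := by linarith
  have hlog : Real.log ((1 + ϖ) / (1 + γ)) ≤ (1 + ϖ) / (1 + γ) - 1 :=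
    Real.log_le_sub_one_of_pos (div_pos h1ϖ h1γ)
  rw [Real.log_div h1ϖ.ne' h1γ.ne'] at hlog
  have key : (1 + ϖ) / (1 + γ) - 1 - ϖ + (1 + ϖ) * a / (a + b) = 0 := by
    rw [hγdef]
    field_simp
    ring
  linarith

private lemma term_eq (a b : ℝ) (ha : 0 ≤ a) (hb : 0 < b) :
    Real.log (1 + a / b) - a / b + (1 + a / b) * a / (a + b) = Real.log (1 + a / b) := by
  have hab : (0:ℝ) < a + b := by linarith
  have : (1 + a / b) * a / (a + b) = a / b := by field_simp; ring
  rw [this]; ring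

/-- Equivalence of the sum-rate maximization problem and its Lagrangian dual transform:
for every `x`, `sup_{ϖ ≥ 0} f(x, ϖ) = F(x)`, attained at `ϖ_k = G_k(x)/I_k(x)`; hence the
suprema over the joint feasible sets coincide, and `x*` maximizes `F` iff `(x*, ϖ*)`
maximizes `f`. -/
theorem stmt_3 {S : Type*} [Nonempty S] {K : ℕ} (hK : 0 < K)
    (G I : Fin K → S → ℝ) (hG : ∀ k x, 0 ≤ G k x) (hI : ∀ k x, 0 < I k x)
    (F : S → ℝ) (hF : ∀ x, F x = ∑ k, Real.log (1 + G k x / I k x))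
    (f : S → (Fin K → ℝ) → ℝ)
    (hf : ∀ x ϖ, f x ϖ =
      ∑ k, (Real.log (1 + ϖ k) - ϖ k + (1 + ϖ k) * G k x / (G k x + I k x))) :
    (∀ x, f x (fun k => G k x / I k x) = F x) ∧
    (∀ (x : S) (ϖ : Fin K → ℝ), (∀ k, 0 ≤ ϖ k) → f x ϖ ≤ F x) ∧
    sSup {r : ℝ | ∃ (x : S) (ϖ : Fin K → ℝ), (∀ k, 0 ≤ ϖ k) ∧ r = f x ϖ}
      = sSup {r : ℝ | ∃ x, r = F x} ∧
    (∀ xs : S, (∀ x, F x ≤ F xs) ↔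
      (∀ (x : S) (ϖ : Fin K → ℝ), (∀ k, 0 ≤ ϖ k) →
        f x ϖ ≤ f xs (fun k => G k xs / I k xs))) := by
  have hstar : ∀ (x : S) (k : Fin K), 0 ≤ G k x / I k x :=
    fun x k => div_nonneg (hG k x) (hI k x).le
  have heq : ∀ x, f x (fun k => G k x / I k x) = F x := by
    intro x
    rw [hf, hF]
    exact Finset.sum_congr rfl fun k _ => term_eq _ _ (hG k x) (hI k x)
  have hle : ∀ (x : S) (ϖ : Fin K → ℝ), (∀ k, 0 ≤ ϖ k) → f x ϖ ≤ F x := by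
    intro x ϖ hϖ
    rw [hf, hF]
    exact Finset.sum_le_sum fun k _ => term_le _ _ _ (hG k x) (hI k x) (hϖ k)
  refine ⟨heq, hle, ?_, ?_⟩
  · set A : Set ℝ := {r : ℝ | ∃ x, r = F x} with hA
    set B : Set ℝ := {r : ℝ | ∃ (x : S) (ϖ : Fin K → ℝ), (∀ k, 0 ≤ ϖ k) ∧ r = f x ϖ} with hB
    have hAB : A ⊆ B := by
      rintro r ⟨x, rfl⟩
      exact ⟨x, _, hstar x, (heq x).symm⟩
    have hdom : ∀ r ∈ B, ∃ a ∈ A, r ≤ a := by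
      rintro r ⟨x, ϖ, hϖ, rfl⟩
      exact ⟨F x, ⟨x, rfl⟩, hle x ϖ hϖ⟩
    have hAne : A.Nonempty := ⟨F Classical.ofNonempty, Classical.ofNonempty, rfl⟩
    by_cases hbdd : BddAbove B
    · have hAbdd : BddAbove A := hbdd.mono hAB
      apply le_antisymm
      · apply csSup_le (hAne.mono hAB)
        intro r hr
        obtain ⟨a, haA, hra⟩ := hdom r hr
        exact hra.trans (le_csSup hAbdd haA)
      · exact csSup_le_csSup hbdd hAne hAB
    · have hAnb : ¬ BddAbove A := by
        intro ⟨M, hM⟩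
        exact hbdd ⟨M, fun r hr => by
          obtain ⟨a, haA, hra⟩ := hdom r hr
          exact hra.trans (hM haA)⟩
      rw [Real.sSup_of_not_bddAbove hbdd, Real.sSup_of_not_bddAbove hAnb]
  · intro xs
    constructor
    · intro h x ϖ hϖ
      rw [heq xs]
      exact (hle x ϖ hϖ).trans (h x)
    · intro h x
      rw [← heq x, ← heq xs]
      exact h x _ (hstar x)
end

section
/- Let S be a nonempty set, K a positive integer, and for each k ∈ {1, …, K} let G_k : S → ℝ with G_k(x) ≥ 0 and I_k : S → ℝ with I_k(x) > 0 for all x ∈ S. Define g(x, y) = Σ_{k=1}^K (2 y_k √(G_k(x)) − y_k² I_k(x)) for x ∈ S and y ∈ ℝ^K. Then for every x ∈ S, the supremum of g(x, y) over y ∈ ℝ^K equals Σ_{k=1}^K G_k(x)/I_k(x), attained at y_k = √(G_k(x))/I_k(x); consequently sup_{x ∈ S, y ∈ ℝ^K} g(x, y) = sup_{x ∈ S} Σ_{k=1}^K G_k(x)/I_k(x), and x* attains the supremum of the sum of ratios over S if and only if (x*, y*) with y*_k = √(G_k(x*))/I_k(x*) attains the supremum of g over S × ℝ^K. -/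
/-!
For fixed `x` the transform separates over `k`, and each summand `2 y √G − y² I` is a concave
quadratic in `y` whose maximum `G / I` is attained at `y = √G / I`; the remaining claims hold for
any function whose partial maximum over the second variable is attained.
-/

theorem two_mul_mul_sub_sq_mul_le_sq_div (s y : ℝ) {c : ℝ} (hc : 0 < c) :
    2 * y * s - y ^ 2 * c ≤ s ^ 2 / c := by
  rw [le_div_iff₀ hc]
  nlinarith [sq_nonneg (s - y * c)]

theorem two_mul_div_mul_sub_div_sq_mul (s : ℝ) {c : ℝ} (hc : c ≠ 0) :
    2 * (s / c) * s - (s / c) ^ 2 * c = s ^ 2 / c := by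
  field_simp
  ring

section PartialMax

variable {S Y α : Type*} {f : S → Y → α} {F : S → α} {yOpt : S → Y}

theorem sSup_joint_eq_sSup_of_partial_max [ConditionallyCompleteLinearOrder α]
    (hopt : ∀ x, f x (yOpt x) = F x) (hle : ∀ x y, f x y ≤ F x) :
    sSup {r : α | ∃ x y, r = f x y} = sSup {r : α | ∃ x, r = F x} := by
  refine csSup_eq_csSup_of_forall_exists_le ?_ ?_
  · rintro _ ⟨x, y, rfl⟩
    exact ⟨F x, ⟨x, rfl⟩, hle x y⟩
  · rintro _ ⟨x, rfl⟩
    exact ⟨F x, ⟨x, yOpt x, (hopt x).symm⟩, le_rfl⟩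

theorem forall_le_iff_forall_le_of_partial_max [Preorder α]
    (hopt : ∀ x, f x (yOpt x) = F x) (hle : ∀ x y, f x y ≤ F x) (xs : S) :
    (∀ x, F x ≤ F xs) ↔ ∀ x y, f x y ≤ f xs (yOpt xs) := by
  rw [hopt xs]
  exact ⟨fun h x y => (hle x y).trans (h x), fun h x => hopt x ▸ h x (yOpt x)⟩

end PartialMax

theorem stmt_5_general {S : Type*} {K : ℕ}
    (G I : Fin K → S → ℝ) (hG : ∀ k x, 0 ≤ G k x) (hI : ∀ k x, 0 < I k x)
    (g : S → (Fin K → ℝ) → ℝ)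
    (hg : ∀ x y, g x y = ∑ k, (2 * y k * Real.sqrt (G k x) - y k ^ 2 * I k x)) :
    (∀ x : S, g x (fun k => Real.sqrt (G k x) / I k x) = ∑ k, G k x / I k x) ∧
    (∀ (x : S) (y : Fin K → ℝ), g x y ≤ ∑ k, G k x / I k x) ∧
    sSup {r : ℝ | ∃ (x : S) (y : Fin K → ℝ), r = g x y}
      = sSup {r : ℝ | ∃ x : S, r = ∑ k, G k x / I k x} ∧
    (∀ xs : S, (∀ x : S, (∑ k, G k x / I k x) ≤ ∑ k, G k xs / I k xs) ↔
      (∀ (x : S) (y : Fin K → ℝ),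
        g x y ≤ g xs (fun k => Real.sqrt (G k xs) / I k xs))) := by
  have hopt : ∀ x, g x (fun k => Real.sqrt (G k x) / I k x) = ∑ k, G k x / I k x := by
    intro x
    rw [hg]
    refine Finset.sum_congr rfl fun k _ => ?_
    rw [two_mul_div_mul_sub_div_sq_mul _ (hI k x).ne', Real.sq_sqrt (hG k x)]
  have hle : ∀ x y, g x y ≤ ∑ k, G k x / I k x := by
    intro x y
    rw [hg]
    refine Finset.sum_le_sum fun k _ => ?_
    simpa only [Real.sq_sqrt (hG k x)] using
      two_mul_mul_sub_sq_mul_le_sq_div (Real.sqrt (G k x)) (y k) (hI k x)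
  exact ⟨hopt, hle, sSup_joint_eq_sSup_of_partial_max hopt hle,
    forall_le_iff_forall_le_of_partial_max hopt hle⟩

/-- Sum-of-ratios quadratic transform: for every `x`, the supremum over `y ∈ ℝᴷ` of
`g(x,y) = Σ_k (2 y_k √(G_k(x)) − y_k² I_k(x))` equals `Σ_k G_k(x)/I_k(x)`, attained at
`y_k = √(G_k(x))/I_k(x)`; hence the joint suprema coincide and `x*` maximizes the sum of
ratios iff `(x*, y*)` maximizes `g`. -/
theorem stmt_5 {S : Type*} [Nonempty S] {K : ℕ} (hK : 0 < K)
    (G I : Fin K → S → ℝ) (hG : ∀ k x, 0 ≤ G k x) (hI : ∀ k x, 0 < I k x)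
    (g : S → (Fin K → ℝ) → ℝ)
    (hg : ∀ x y, g x y = ∑ k, (2 * y k * Real.sqrt (G k x) - y k ^ 2 * I k x)) :
    (∀ x : S, g x (fun k => Real.sqrt (G k x) / I k x) = ∑ k, G k x / I k x) ∧
    (∀ (x : S) (y : Fin K → ℝ), g x y ≤ ∑ k, G k x / I k x) ∧
    sSup {r : ℝ | ∃ (x : S) (y : Fin K → ℝ), r = g x y}
      = sSup {r : ℝ | ∃ x : S, r = ∑ k, G k x / I k x} ∧
    (∀ xs : S, (∀ x : S, (∑ k, G k x / I k x) ≤ ∑ k, G k xs / I k xs) ↔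
      (∀ (x : S) (y : Fin K → ℝ),
        g x y ≤ g xs (fun k => Real.sqrt (G k xs) / I k xs))) :=
  stmt_5_general G I hG hI g hg
end

section
/- Let S be a nonempty set, K a positive integer, Ḡ ≥ 0 and σ² > 0 real numbers, and for each k ∈ {1, …, K} let G_k : S → ℝ with 0 ≤ G_k(x) ≤ Ḡ and I_k : S → ℝ with I_k(x) ≥ σ² for all x ∈ S. Then for every x ∈ S and every ϖ ∈ [0,∞)^K, f(x, ϖ) = Σ_{k=1}^K [ln(1 + ϖ_k) − ϖ_k + (1 + ϖ_k)·G_k(x)/(G_k(x) + I_k(x))] ≤ K · ln(1 + Ḡ/σ²); that is, the transformed objective is bounded above on S × [0,∞)^K. -/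
/-- Boundedness of the Lagrangian-dual-transformed uplink objective: if `0 ≤ G_k(x) ≤ Ḡ`
and `I_k(x) ≥ σ² > 0` for all `k, x`, then for every `x` and every `ϖ ∈ [0,∞)ᴷ`,
`Σ_k [ln(1+ϖ_k) − ϖ_k + (1+ϖ_k)·G_k(x)/(G_k(x)+I_k(x))] ≤ K·ln(1 + Ḡ/σ²)`. -/
theorem stmt_7 {S : Type*} [Nonempty S] {K : ℕ} (hK : 0 < K)
    (Gbar σsq : ℝ) (hGbar : 0 ≤ Gbar) (hσ : 0 < σsq)
    (G I : Fin K → S → ℝ) (hG0 : ∀ k x, 0 ≤ G k x) (hGb : ∀ k x, G k x ≤ Gbar)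
    (hI : ∀ k x, σsq ≤ I k x) :
    ∀ (x : S) (ϖ : Fin K → ℝ), (∀ k, 0 ≤ ϖ k) →
      (∑ k, (Real.log (1 + ϖ k) - ϖ k + (1 + ϖ k) * G k x / (G k x + I k x)))
        ≤ K * Real.log (1 + Gbar / σsq) := by
  intro x ϖ hϖ
  have key : ∀ k : Fin K,
      Real.log (1 + ϖ k) - ϖ k + (1 + ϖ k) * G k x / (G k x + I k x)
        ≤ Real.log (1 + Gbar / σsq) := by
    intro k
    set g := G k x with hg
    set i := I k x with hi'
    set w := ϖ k with hw
    have hg0 : 0 ≤ g := hG0 k x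
    have hipos : 0 < i := lt_of_lt_of_le hσ (hI k x)
    have hgi : 0 < g + i := by linarith
    have hwpos : 0 < 1 + w := by have := hϖ k; linarith
    have hfrac : 0 < (1 + w) * (i / (g + i)) := by positivity
    have hlog : Real.log ((1 + w) * (i / (g + i))) ≤ (1 + w) * (i / (g + i)) - 1 :=
      Real.log_le_sub_one_of_pos hfrac
    have hsplit : Real.log ((1 + w) * (i / (g + i)))
        = Real.log (1 + w) + Real.log i - Real.log (g + i) := by
      rw [Real.log_mul (ne_of_gt hwpos) (ne_of_gt (by positivity)),
        Real.log_div (ne_of_gt hipos) (ne_of_gt hgi)]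
      ring
    have hiden : (1 + w) * (i / (g + i)) = (1 + w) - (1 + w) * g / (g + i) := by
      field_simp
      ring
    have step1 : Real.log (1 + w) - w + (1 + w) * g / (g + i)
        ≤ Real.log (g + i) - Real.log i := by
      rw [hsplit, hiden] at hlog
      linarith
    have step2 : Real.log (g + i) - Real.log i = Real.log (1 + g / i) := by
      rw [← Real.log_div (ne_of_gt hgi) (ne_of_gt hipos)]
      congr 1
      field_simp
      ring
    have step3 : Real.log (1 + g / i) ≤ Real.log (1 + Gbar / σsq) := by
      apply Real.log_le_log (by positivity)
      have : g / i ≤ Gbar / σsq := div_le_div₀ hGbar (hGb k x) hσ (hI k x)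
      linarith
    linarith
  calc (∑ k, (Real.log (1 + ϖ k) - ϖ k + (1 + ϖ k) * G k x / (G k x + I k x)))
      ≤ ∑ _k : Fin K, Real.log (1 + Gbar / σsq) := Finset.sum_le_sum fun k _ => key k
    _ = K * Real.log (1 + Gbar / σsq) := by
        rw [Finset.sum_const, Finset.card_univ, Fintype.card_fin, nsmul_eq_mul]
end

section
/- Fix positive integers N, τ_p with N > τ_p, finite UE sets 𝓤_u and 𝓤_d, a pilot-sharing partition assigning to each UL UE k the set 𝓟_k ⊆ 𝓤_u of UEs sharing its pilot, nonnegative channel parameters α_{mk}, β_{mk} with β_{mk} ≥ α_{mk}², inter-AP interference powers ζ_{mj} ≥ 0, cross-UE variances ε_{nk} ≥ 0, pilot correlations ρ_{nq} ≥ 0, powers 𝓔_u > 0, 𝓔_d > 0, and N₀ > 0, and a finite ground AP set 𝓐. For disjoint subsets 𝓐_u, 𝓐_d ⊆ 𝓐 and variables ω = (ω_{mk}) ∈ ℂ^{𝓐_u × 𝓤_u}, 𝓔 = (𝓔_{u,k}) with 0 ≤ 𝓔_{u,k} ≤ 𝓔_u, and κ = (κ_{jn}) ∈ ℝ^{𝓐_d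 × 𝓤_d} with Σ_{q ∈ 𝓤_d} κ_{jq}² ≤ 1 for each j ∈ 𝓐_d, define the UL SINRs η_{u,k} = (N−τ_p)·𝓔_{u,k}·|Σ_{m∈𝓐_u} \overline{ω_{mk}} α_{mk}²|² / (Σ_{k'∈𝓤_u} 𝓔_{u,k'} Σ_{m∈𝓐_u} |ω_{mk}|² α_{mk}² (β_{mk'} − α_{mk'}²) + (N−τ_p)·Σ_{i∈𝓟_k∖{k}} 𝓔_{u,i} |Σ_{m∈𝓐_u} \overline{ω_{mk}} α_{mi}²|² + N·Σ_{n∈𝓤_d} Σ_{m∈𝓐_u} Σ_{j∈𝓐_d} 𝓔_d κ_{jn}² ζ_{mj} |ω_{mk}|² α_{mk}² + N₀·Σ_{m∈𝓐_u} |ω_{mk}|² α_{mk}²), the DL SINRs η_{d,n} = (N−τ_p)·𝓔_d·(Σ_{j∈𝓐_d} α_{jn} κ_{jn})² / (Σ_{q∈𝓤_d} Σ_{j∈𝓐_d} 𝓔_d κ_{jq}² (β_{jn} − α_{jn}²) + (N−τ_p)·𝓔_d·Σ_{q∈𝓤_d, q≠n} ρ_{nq} (Σ_{j∈𝓐_d}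 κ_{jq} α_{jn})² + Σ_{k∈𝓤_u} 𝓔_{u,k} ε_{nk} + N₀) (with the convention that a fraction with zero denominator is 0), and the sum spectral efficiency R_s(𝓐_u, 𝓐_d; ω, 𝓔, κ) = Σ_{k∈𝓤_u} log(1 + η_{u,k}) + Σ_{n∈𝓤_d} log(1 + η_{d,n}). Let R̄(𝓐_u, 𝓐_d) denote the supremum of R_s over all feasible (ω, 𝓔, κ). Then for any disjoint pairs with 𝓐_u ⊆ 𝓐_u' and 𝓐_d ⊆ 𝓐_d' (𝓐_u' and 𝓐_d' disjoint subsets of 𝓐), one has R̄(𝓐_u, 𝓐_d) ≤ R̄(𝓐_u', 𝓐_d'); i.e., the optimized sum UL-DL spectral efficiency is monotonically non-decreasing in the scheduled AP sets. -/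
/-!
A feasible point for the smaller AP sets stays feasible for the larger ones once the combining
weights and the power-control coefficients are extended by zero on the added APs, and this
extension leaves every SINR, hence the sum rate, unchanged: the set of achievable sum rates can
only grow. To compare the suprema (`sSup` of a set of reals that is not bounded above is `0`), the
sum rate must also be bounded on the larger feasible set. Cauchy–Schwarz against the noise term of
the denominator bounds each UL SINR by `(N - τ_p) 𝓔_u Σ_m α_{mk}² / N₀`, and each DL SINR by
`(N - τ_p) 𝓔_d |𝓐_d| Σ_j α_{jn}² / N₀`.
-/

open Finset ComplexConjugate

theorem div_mem_Icc_of_le_mul_of_mul_le {a b c s d : ℝ} (ha : 0 ≤ a) (hb : 0 ≤ b) (hc : 0 < c)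
    (hs : 0 ≤ s) (has : a ≤ b * s) (hsd : c * s ≤ d) : a / d ∈ Set.Icc 0 (b / c) := by
  have hd : 0 ≤ d := (mul_nonneg hc.le hs).trans hsd
  refine ⟨div_nonneg ha hd, ?_⟩
  rcases hd.eq_or_lt with rfl | hd
  · simpa using div_nonneg hb hc.le
  rw [div_le_div_iff₀ hd hc]
  calc a * c ≤ b * s * c := by gcongr
    _ = b * (c * s) := by ring
    _ ≤ b * d := by gcongr

theorem norm_sum_conj_mul_sq_le {ι : Type*} (s : Finset ι) (w : ι → ℂ) {a : ι → ℝ}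
    (ha : ∀ i ∈ s, 0 ≤ a i) :
    ‖∑ i ∈ s, conj (w i) * (a i : ℂ)‖ ^ 2 ≤ (∑ i ∈ s, ‖w i‖ ^ 2 * a i) * ∑ i ∈ s, a i := by
  have hnorm : ‖∑ i ∈ s, conj (w i) * (a i : ℂ)‖ ≤ ∑ i ∈ s, ‖w i‖ * a i :=
    (norm_sum_le _ _).trans_eq <| sum_congr rfl fun i hi => by
      simp [Complex.norm_real, abs_of_nonneg (ha i hi)]
  calc ‖∑ i ∈ s, conj (w i) * (a i : ℂ)‖ ^ 2 ≤ (∑ i ∈ s, ‖w i‖ * a i) ^ 2 := by gcongr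
    _ ≤ (∑ i ∈ s, ‖w i‖ ^ 2 * a i) * ∑ i ∈ s, a i :=
      sum_sq_le_sum_mul_sum_of_sq_le_mul s (fun i hi => mul_nonneg (sq_nonneg _) (ha i hi)) ha
        fun i _ => (by ring : (‖w i‖ * a i) ^ 2 = ‖w i‖ ^ 2 * a i * a i).le

theorem sum_log_one_add_le_sum_log_one_add {ι : Type*} (s : Finset ι) {f g : ι → ℝ}
    (h : ∀ i ∈ s, f i ∈ Set.Icc 0 (g i)) :
    ∑ i ∈ s, Real.log (1 + f i) ≤ ∑ i ∈ s, Real.log (1 + g i) :=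
  sum_le_sum fun i hi => Real.log_le_log (by linarith [(h i hi).1]) (by linarith [(h i hi).2])

section ClosedFormSINR

variable {A Uu Ud : Type*} [Fintype Uu] [Fintype Ud]
  (c N : ℝ) (P : Uu → Finset Uu) (αu βu : A → Uu → ℝ) (αd βd : A → Ud → ℝ) (ζ : A → A → ℝ)
  (ε : Ud → Uu → ℝ) (ρ : Ud → Ud → ℝ) (Ed N₀ : ℝ)

-- `c` stands for `N - τ_p`.
noncomputable def ulSinr [DecidableEq Uu] (Au Ad : Finset A) (ω : A → Uu → ℂ) (E : Uu → ℝ)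
    (κ : A → Ud → ℝ) (k : Uu) : ℝ :=
  c * E k * ‖∑ m ∈ Au, conj (ω m k) * ((αu m k ^ 2 : ℝ) : ℂ)‖ ^ 2 /
    ((∑ k', E k' * ∑ m ∈ Au, ‖ω m k‖ ^ 2 * αu m k ^ 2 * (βu m k' - αu m k' ^ 2))
      + c * (∑ i ∈ (P k).erase k, E i * ‖∑ m ∈ Au, conj (ω m k) * ((αu m i ^ 2 : ℝ) : ℂ)‖ ^ 2)
      + N * (∑ n, ∑ m ∈ Au, ∑ j ∈ Ad, Ed * κ j n ^ 2 * ζ m j * ‖ω m k‖ ^ 2 * αu m k ^ 2)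
      + N₀ * ∑ m ∈ Au, ‖ω m k‖ ^ 2 * αu m k ^ 2)

noncomputable def dlSinr [DecidableEq Ud] (Ad : Finset A) (E : Uu → ℝ) (κ : A → Ud → ℝ)
    (n : Ud) : ℝ :=
  c * Ed * (∑ j ∈ Ad, αd j n * κ j n) ^ 2 /
    ((∑ q, ∑ j ∈ Ad, Ed * κ j q ^ 2 * (βd j n - αd j n ^ 2))
      + c * Ed * (∑ q ∈ univ.erase n, ρ n q * (∑ j ∈ Ad, κ j q * αd j n) ^ 2)
      + (∑ k, E k * ε n k) + N₀)

variable {c N P αu βu αd βd ζ ε ρ Ed N₀}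

theorem ulSinr_indicator [DecidableEq Uu] {Au Ad Au' Ad' : Finset A} (hAu : Au ⊆ Au')
    (hAd : Ad ⊆ Ad') (ω : A → Uu → ℂ) (E : Uu → ℝ) (κ : A → Ud → ℝ) (k : Uu) :
    ulSinr c N P αu βu ζ Ed N₀ Au' Ad' ((Au : Set A).indicator ω) E ((Ad : Set A).indicator κ) k =
      ulSinr c N P αu βu ζ Ed N₀ Au Ad ω E κ k := by
  -- `← sum_subset` drops the added APs, where the summands vanish; on the old APs the
  -- indicators are the identity.
  simp +contextual [ulSinr, ← sum_subset hAu, ← sum_subset hAd]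

theorem dlSinr_indicator [DecidableEq Ud] {Ad Ad' : Finset A} (hAd : Ad ⊆ Ad') (E : Uu → ℝ)
    (κ : A → Ud → ℝ) (n : Ud) :
    dlSinr c αd βd ε ρ Ed N₀ Ad' E ((Ad : Set A).indicator κ) n =
      dlSinr c αd βd ε ρ Ed N₀ Ad E κ n := by
  simp +contextual [dlSinr, ← sum_subset hAd]

theorem ulSinr_mem_Icc [DecidableEq Uu] (hc : 0 ≤ c) (hN : 0 ≤ N)
    (hβu : ∀ m k, αu m k ^ 2 ≤ βu m k) (hζ : ∀ m j, 0 ≤ ζ m j) (hEd : 0 ≤ Ed) (hN₀ : 0 < N₀)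
    {Eu : ℝ} {E : Uu → ℝ} (hE : ∀ k, E k ∈ Set.Icc 0 Eu) (Au Ad : Finset A) (ω : A → Uu → ℂ)
    (κ : A → Ud → ℝ) (k : Uu) :
    ulSinr c N P αu βu ζ Ed N₀ Au Ad ω E κ k ∈
      Set.Icc 0 (c * Eu * (∑ m ∈ Au, αu m k ^ 2) / N₀) := by
  have hEk := hE k
  have hα : ∀ m ∈ Au, 0 ≤ αu m k ^ 2 := fun m _ => sq_nonneg _
  have hcEu : 0 ≤ c * Eu := mul_nonneg hc (hEk.1.trans hEk.2)
  refine div_mem_Icc_of_le_mul_of_mul_le (mul_nonneg (mul_nonneg hc hEk.1) (sq_nonneg _))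
    (mul_nonneg hcEu (sum_nonneg hα)) hN₀ (sum_nonneg fun m _ => by positivity) ?_
    (le_add_of_nonneg_left ?_)
  · calc c * E k * ‖∑ m ∈ Au, conj (ω m k) * ((αu m k ^ 2 : ℝ) : ℂ)‖ ^ 2
        ≤ c * Eu * ((∑ m ∈ Au, ‖ω m k‖ ^ 2 * αu m k ^ 2) * ∑ m ∈ Au, αu m k ^ 2) :=
          mul_le_mul (mul_le_mul_of_nonneg_left hEk.2 hc) (norm_sum_conj_mul_sq_le Au _ hα)
            (sq_nonneg _) hcEu
      _ = _ := by ring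
  · refine add_nonneg (add_nonneg ?_ (mul_nonneg hc ?_)) (mul_nonneg hN ?_)
    · exact sum_nonneg fun k' _ => mul_nonneg (hE k').1 <|
        sum_nonneg fun m _ => mul_nonneg (by positivity) (sub_nonneg.2 (hβu m k'))
    · exact sum_nonneg fun i _ => mul_nonneg (hE i).1 (sq_nonneg _)
    · exact sum_nonneg fun n _ => sum_nonneg fun m _ => sum_nonneg fun j _ => by
        have := hζ m j
        positivity

theorem dlSinr_mem_Icc [DecidableEq Ud] (hc : 0 ≤ c) (hβd : ∀ j n, αd j n ^ 2 ≤ βd j n)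
    (hε : ∀ n k, 0 ≤ ε n k) (hρ : ∀ n q, 0 ≤ ρ n q) (hEd : 0 ≤ Ed) (hN₀ : 0 < N₀)
    {E : Uu → ℝ} (hE : ∀ k, 0 ≤ E k) {κ : A → Ud → ℝ} (hκ : ∀ j, ∑ q, κ j q ^ 2 ≤ 1)
    (Ad : Finset A) (n : Ud) :
    dlSinr c αd βd ε ρ Ed N₀ Ad E κ n ∈
      Set.Icc 0 (c * Ed * (#Ad * ∑ j ∈ Ad, αd j n ^ 2) / N₀) := by
  have hκn : ∀ j ∈ Ad, κ j n ^ 2 ≤ 1 := fun j _ =>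
    (single_le_sum (fun q _ => sq_nonneg (κ j q)) (mem_univ n)).trans (hκ j)
  refine div_mem_Icc_of_le_mul_of_mul_le (s := 1) (by positivity)
    (by have := sum_nonneg fun j (_ : j ∈ Ad) => sq_nonneg (αd j n); positivity) hN₀ zero_le_one
    ?_ ?_
  · rw [mul_one]
    gcongr
    calc (∑ j ∈ Ad, αd j n * κ j n) ^ 2 ≤ (∑ j ∈ Ad, αd j n ^ 2) * ∑ j ∈ Ad, κ j n ^ 2 :=
          sum_mul_sq_le_sq_mul_sq _ _ _
      _ ≤ (∑ j ∈ Ad, αd j n ^ 2) * #Ad := by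
          gcongr
          simpa using sum_le_sum hκn
      _ = #Ad * ∑ j ∈ Ad, αd j n ^ 2 := mul_comm _ _
  · rw [mul_one]
    refine le_add_of_nonneg_left (add_nonneg (add_nonneg ?_ (mul_nonneg (by positivity) ?_)) ?_)
    · exact sum_nonneg fun q _ => sum_nonneg fun j _ =>
        mul_nonneg (by positivity) (sub_nonneg.2 (hβd j n))
    · exact sum_nonneg fun q _ => mul_nonneg (hρ n q) (sq_nonneg _)
    · exact sum_nonneg fun k _ => mul_nonneg (hE k) (hε n k)

end ClosedFormSINR

theorem stmt_16_general {A Uu Ud : Type*} [Fintype Uu] [Fintype Ud]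
    [DecidableEq Uu] [DecidableEq Ud]
    (N τp : ℕ) (hNτ : τp < N)
    (P : Uu → Finset Uu)
    (αu βu : A → Uu → ℝ) (hβu : ∀ m k, (αu m k) ^ 2 ≤ βu m k)
    (αd βd : A → Ud → ℝ) (hβd : ∀ j n, (αd j n) ^ 2 ≤ βd j n)
    (ζ : A → A → ℝ) (hζ : ∀ m j, 0 ≤ ζ m j)
    (ε : Ud → Uu → ℝ) (hε : ∀ n k, 0 ≤ ε n k)
    (ρ : Ud → Ud → ℝ) (hρ : ∀ n q, 0 ≤ ρ n q)
    (Eu Ed N₀ : ℝ) (hEu : 0 < Eu) (hEd : 0 < Ed) (hN₀ : 0 < N₀)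
    (ηu : Finset A → Finset A → (A → Uu → ℂ) → (Uu → ℝ) → (A → Ud → ℝ) → Uu → ℝ)
    (hηu : ∀ (Au Ad : Finset A) (ω : A → Uu → ℂ) (E : Uu → ℝ) (κ : A → Ud → ℝ) (k : Uu),
      ηu Au Ad ω E κ k =
        ((N : ℝ) - τp) * E k * ‖∑ m ∈ Au, (starRingEnd ℂ) (ω m k) * (((αu m k) ^ 2 : ℝ) : ℂ)‖ ^ 2 /
          ((∑ k' : Uu, E k' * ∑ m ∈ Au, ‖ω m k‖ ^ 2 * (αu m k) ^ 2 * (βu m k' - (αu m k') ^ 2))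
            + ((N : ℝ) - τp) *
              (∑ i ∈ (P k).erase k,
                E i * ‖∑ m ∈ Au, (starRingEnd ℂ) (ω m k) * (((αu m i) ^ 2 : ℝ) : ℂ)‖ ^ 2)
            + (N : ℝ) *
              (∑ n : Ud, ∑ m ∈ Au, ∑ j ∈ Ad, Ed * (κ j n) ^ 2 * ζ m j * ‖ω m k‖ ^ 2 * (αu m k) ^ 2)
            + N₀ * ∑ m ∈ Au, ‖ω m k‖ ^ 2 * (αu m k) ^ 2))
    (ηd : Finset A → (Uu → ℝ) → (A → Ud → ℝ) → Ud → ℝ)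
    (hηd : ∀ (Ad : Finset A) (E : Uu → ℝ) (κ : A → Ud → ℝ) (n : Ud),
      ηd Ad E κ n =
        ((N : ℝ) - τp) * Ed * (∑ j ∈ Ad, αd j n * κ j n) ^ 2 /
          ((∑ q : Ud, ∑ j ∈ Ad, Ed * (κ j q) ^ 2 * (βd j n - (αd j n) ^ 2))
            + ((N : ℝ) - τp) * Ed *
              (∑ q ∈ Finset.univ.erase n, ρ n q * (∑ j ∈ Ad, κ j q * αd j n) ^ 2)
            + (∑ k : Uu, E k * ε n k) + N₀))
    (Rs : Finset A → Finset A → (A → Uu → ℂ) → (Uu → ℝ) → (A → Ud → ℝ) → ℝ)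
    (hRs : ∀ (Au Ad : Finset A) (ω : A → Uu → ℂ) (E : Uu → ℝ) (κ : A → Ud → ℝ),
      Rs Au Ad ω E κ = (∑ k : Uu, Real.log (1 + ηu Au Ad ω E κ k))
        + ∑ n : Ud, Real.log (1 + ηd Ad E κ n))
    (Rbar : Finset A → Finset A → ℝ)
    (hRbar : ∀ Au Ad : Finset A,
      Rbar Au Ad = sSup {r : ℝ | ∃ (ω : A → Uu → ℂ) (E : Uu → ℝ) (κ : A → Ud → ℝ),
        (∀ k, 0 ≤ E k ∧ E k ≤ Eu) ∧ (∀ j : A, ∑ q : Ud, (κ j q) ^ 2 ≤ 1) ∧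
        r = Rs Au Ad ω E κ}) :
    ∀ Au Ad Au' Ad' : Finset A, Disjoint Au Ad → Disjoint Au' Ad' →
      Au ⊆ Au' → Ad ⊆ Ad' → Rbar Au Ad ≤ Rbar Au' Ad' := by
  intro Au Ad Au' Ad' _ _ hAu hAd
  have hc : (0 : ℝ) ≤ N - τp := sub_nonneg.2 (by exact_mod_cast hNτ.le)
  obtain rfl : ηu = ulSinr (N - τp) N P αu βu ζ Ed N₀ := by
    funext Au Ad ω E κ k
    exact hηu Au Ad ω E κ k
  obtain rfl : ηd = dlSinr (N - τp) αd βd ε ρ Ed N₀ := by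
    funext Ad E κ n
    exact hηd Ad E κ n
  rw [hRbar, hRbar]
  refine csSup_le_csSup
    ⟨(∑ k, Real.log (1 + (N - τp) * Eu * (∑ m ∈ Au', αu m k ^ 2) / N₀))
      + ∑ n, Real.log (1 + (N - τp) * Ed * (#Ad' * ∑ j ∈ Ad', αd j n ^ 2) / N₀), ?_⟩
    ⟨_, 0, 0, 0, fun _ => ⟨le_rfl, hEu.le⟩, fun _ => by simp, rfl⟩ ?_
  · rintro r ⟨ω, E, κ, hE, hκ, rfl⟩
    rw [hRs]
    exact add_le_add
      (sum_log_one_add_le_sum_log_one_add _ fun k _ =>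
        ulSinr_mem_Icc hc N.cast_nonneg hβu hζ hEd.le hN₀ hE Au' Ad' ω κ k)
      (sum_log_one_add_le_sum_log_one_add _ fun n _ =>
        dlSinr_mem_Icc hc hβd hε hρ hEd.le hN₀ (fun k => (hE k).1) hκ Ad' n)
  · rintro r ⟨ω, E, κ, hE, hκ, rfl⟩
    refine ⟨(Au : Set A).indicator ω, E, (Ad : Set A).indicator κ, hE, fun j => ?_, ?_⟩
    · rcases Set.indicator_eq_zero_or_self (Ad : Set A) κ j with h | h <;> simp [h, hκ j]
    · simp only [hRs, ulSinr_indicator hAu hAd, dlSinr_indicator hAd]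

/-- Monotonicity of the optimized sum UL-DL spectral efficiency in the scheduled AP sets
(Proposition 2): if `𝓐_u ⊆ 𝓐_u'` and `𝓐_d ⊆ 𝓐_d'` (each pair disjoint), then
`R̄(𝓐_u, 𝓐_d) ≤ R̄(𝓐_u', 𝓐_d')`, where `R̄` is the supremum of the closed-form ZF sum
spectral efficiency over the feasible CPU weights, UL transmit powers, and DL power
control coefficients. -/
theorem stmt_16 {A Uu Ud : Type*} [Fintype A] [Fintype Uu] [Fintype Ud]
    [DecidableEq A] [DecidableEq Uu] [DecidableEq Ud]
    (N τp : ℕ) (hNτ : τp < N)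
    (P : Uu → Finset Uu)
    (αu βu : A → Uu → ℝ) (hαu : ∀ m k, 0 ≤ αu m k) (hβu : ∀ m k, (αu m k) ^ 2 ≤ βu m k)
    (αd βd : A → Ud → ℝ) (hαd : ∀ j n, 0 ≤ αd j n) (hβd : ∀ j n, (αd j n) ^ 2 ≤ βd j n)
    (ζ : A → A → ℝ) (hζ : ∀ m j, 0 ≤ ζ m j)
    (ε : Ud → Uu → ℝ) (hε : ∀ n k, 0 ≤ ε n k)
    (ρ : Ud → Ud → ℝ) (hρ : ∀ n q, 0 ≤ ρ n q)
    (Eu Ed N₀ : ℝ) (hEu : 0 < Eu) (hEd : 0 < Ed) (hN₀ : 0 < N₀)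
    (ηu : Finset A → Finset A → (A → Uu → ℂ) → (Uu → ℝ) → (A → Ud → ℝ) → Uu → ℝ)
    (hηu : ∀ (Au Ad : Finset A) (ω : A → Uu → ℂ) (E : Uu → ℝ) (κ : A → Ud → ℝ) (k : Uu),
      ηu Au Ad ω E κ k =
        ((N : ℝ) - τp) * E k * ‖∑ m ∈ Au, (starRingEnd ℂ) (ω m k) * (((αu m k) ^ 2 : ℝ) : ℂ)‖ ^ 2 /
          ((∑ k' : Uu, E k' * ∑ m ∈ Au, ‖ω m k‖ ^ 2 * (αu m k) ^ 2 * (βu m k' - (αu m k') ^ 2))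
            + ((N : ℝ) - τp) *
              (∑ i ∈ (P k).erase k,
                E i * ‖∑ m ∈ Au, (starRingEnd ℂ) (ω m k) * (((αu m i) ^ 2 : ℝ) : ℂ)‖ ^ 2)
            + (N : ℝ) *
              (∑ n : Ud, ∑ m ∈ Au, ∑ j ∈ Ad, Ed * (κ j n) ^ 2 * ζ m j * ‖ω m k‖ ^ 2 * (αu m k) ^ 2)
            + N₀ * ∑ m ∈ Au, ‖ω m k‖ ^ 2 * (αu m k) ^ 2))
    (ηd : Finset A → (Uu → ℝ) → (A → Ud → ℝ) → Ud → ℝ)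
    (hηd : ∀ (Ad : Finset A) (E : Uu → ℝ) (κ : A → Ud → ℝ) (n : Ud),
      ηd Ad E κ n =
        ((N : ℝ) - τp) * Ed * (∑ j ∈ Ad, αd j n * κ j n) ^ 2 /
          ((∑ q : Ud, ∑ j ∈ Ad, Ed * (κ j q) ^ 2 * (βd j n - (αd j n) ^ 2))
            + ((N : ℝ) - τp) * Ed *
              (∑ q ∈ Finset.univ.erase n, ρ n q * (∑ j ∈ Ad, κ j q * αd j n) ^ 2)
            + (∑ k : Uu, E k * ε n k) + N₀))
    (Rs : Finset A → Finset A → (A → Uu → ℂ) → (Uu → ℝ) → (A → Ud → ℝ) → ℝ)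
    (hRs : ∀ (Au Ad : Finset A) (ω : A → Uu → ℂ) (E : Uu → ℝ) (κ : A → Ud → ℝ),
      Rs Au Ad ω E κ = (∑ k : Uu, Real.log (1 + ηu Au Ad ω E κ k))
        + ∑ n : Ud, Real.log (1 + ηd Ad E κ n))
    (Rbar : Finset A → Finset A → ℝ)
    (hRbar : ∀ Au Ad : Finset A,
      Rbar Au Ad = sSup {r : ℝ | ∃ (ω : A → Uu → ℂ) (E : Uu → ℝ) (κ : A → Ud → ℝ),
        (∀ k, 0 ≤ E k ∧ E k ≤ Eu) ∧ (∀ j : A, ∑ q : Ud, (κ j q) ^ 2 ≤ 1) ∧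
        r = Rs Au Ad ω E κ}) :
    ∀ Au Ad Au' Ad' : Finset A, Disjoint Au Ad → Disjoint Au' Ad' →
      Au ⊆ Au' → Ad ⊆ Ad' → Rbar Au Ad ≤ Rbar Au' Ad' :=
  stmt_16_general N τp hNτ P αu βu hβu αd βd hβd ζ hζ ε hε ρ hρ Eu Ed N₀ hEu hEd hN₀ ηu hηu ηd hηd
    Rs hRs Rbar hRbar
end
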